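/- Let f : [0,10] → [0,10] be defined by f(10) = 0, f(x) = (4/5)x for x ∈ (0,5), f(x) = (6/5)x − 2 for x ∈ [5,10), and f(0) = 10. Then f is surjective and has no fixed point. -/
import Mathlib


noncomputable def f (x : ℝ) : ℝ :=
  if x = 0 then 10 else if x < 5 then (4 / 5) * x else if x < 10 then (6 / 5) * x - 2 else 0

theorem stmt_12 :
    Set.SurjOn f (Set.Icc 0 10) (Set.Icc 0 10) ∧
    ∀ x ∈ Set.Icc (0 : ℝ) 10, f x ≠ x := by
  constructor
  · intro y hy
    obtain ⟨hy0, hy10⟩ := hy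
    rcases eq_or_lt_of_le hy0 with h0 | h0
    · -- y = 0, take x = 10
      refine ⟨10, ⟨by norm_num, by norm_num⟩, ?_⟩
      simp only [f]; norm_num [← h0]
    rcases lt_or_ge y 4 with h4 | h4
    · -- x = 5y/4
      refine ⟨5 * y / 4, ⟨by linarith, by linarith⟩, ?_⟩
      have hne : 5 * y / 4 ≠ 0 := by positivity
      simp only [f, hne, if_false]
      rw [if_pos (by linarith)]
      ring
    rcases lt_or_ge y 10 with h10 | h10
    · -- x = 5(y+2)/6
      refine ⟨5 * (y + 2) / 6, ⟨by linarith, by linarith⟩, ?_⟩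
      have hne : 5 * (y + 2) / 6 ≠ 0 := by positivity
      simp only [f, hne, if_false]
      rw [if_neg (by linarith), if_pos (by linarith)]
      ring
    · -- y = 10, take x = 0
      have : y = 10 := le_antisymm hy10 h10
      refine ⟨0, ⟨le_refl 0, by norm_num⟩, ?_⟩
      simp [f, this]
  · rintro x ⟨hx0, hx10⟩ hfx
    unfold f at hfx
    rcases eq_or_ne x 0 with h | h
    · rw [if_pos h, h] at hfx; norm_num at hfx
    rw [if_neg h] at hfx
    rcases lt_or_ge x 5 with h5 | h5
    · rw [if_pos h5] at hfx
      have : x = 0 := by linarith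
      exact h this
    rw [if_neg (not_lt.mpr h5)] at hfx
    rcases lt_or_ge x 10 with h10 | h10
    · rw [if_pos h10] at hfx; linarith
    · rw [if_neg (not_lt.mpr h10)] at hfx
      exact h hfx.symm
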